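/- In the prescription system for subsystem 3, consider strategies assigning to each t and history (z³_{1:t}, θ_{0:t−1}) a complete action θ_t = (γ¹_t, γ²_t, u³_t), with worst-case cost J³(·) := max over realizations (x̂_0 ∈ X̂₀, w_{0:T−1}) of d̂(x̂_T) for a terminal cost d̂ : 𝒳̂_T → ℝ. Then the minimum of J³ over all such strategies equals the minimum over structured strategies of the form θ_t = φ_t(P³_t(z³_{1:t}, θ_{0:t−1})); equivalently, for every strategy there is a structured strategy of this form with no larger worst-case cost. -/
import Mathlib


/-- The prescription system for subsystem 3. -/
structure Pres3 where
  T : ℕ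
  hT : 1 ≤ T
  X : ℕ → Type
  U1 : ℕ → Type
  U2 : ℕ → Type
  U3 : ℕ → Type
  W : ℕ → Type
  Z1 : ℕ → Type
  Z2 : ℕ → Type
  Z3 : ℕ → Type
  f : ∀ t, X t → U1 t → U2 t → U3 t → W t → X (t+1)
  h1 : ∀ t, X t → U1 t → U2 t → U3 t → Z1 (t+1)
  h2 : ∀ t, X t → U1 t → U2 t → U3 t → Z2 (t+1)
  h3 : ∀ t, X t → U1 t → U2 t → U3 t → Z3 (t+1)
  ftil1 : ∀ t, Set (X t) → (U1 t × U2 t × U3 t) → Z1 (t+1) → Set (X (t+1))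
  ftil2 : ∀ t, Set (X t × Set (X t)) → (Set (X t) → U1 t) → U2 t → U3 t →
    Z2 (t+1) → Set (X (t+1) × Set (X (t+1)))
  X0 : Set (X 0)
  X0ne : X0.Nonempty
  Xfin : ∀ t, Finite (X t)
  Xne : ∀ t, Nonempty (X t)
  U1fin : ∀ t, Finite (U1 t)
  U1ne : ∀ t, Nonempty (U1 t)
  U2fin : ∀ t, Finite (U2 t)
  U2ne : ∀ t, Nonempty (U2 t)
  U3fin : ∀ t, Finite (U3 t)
  U3ne : ∀ t, Nonempty (U3 t)
  Wfin : ∀ t, Finite (W t)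
  Wne : ∀ t, Nonempty (W t)
  Z1fin : ∀ t, Finite (Z1 t)
  Z1ne : ∀ t, Nonempty (Z1 t)
  Z2fin : ∀ t, Finite (Z2 t)
  Z2ne : ∀ t, Nonempty (Z2 t)
  Z3fin : ∀ t, Finite (Z3 t)
  Z3ne : ∀ t, Nonempty (Z3 t)

namespace Pres3

variable (S : Pres3)

/-- A complete action of subsystem 3 at time `t`:
`θ_t = (γ¹_t, γ²_t, u³_t)`. -/
def Theta (t : ℕ) :=
  (Set (S.X t) → Set (S.X t × Set (S.X t)) → S.U1 t) ×
  (Set (S.X t × Set (S.X t)) → S.U2 t) × S.U3 t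

/-- The initial subsystem-2 information state `P²_0 = {(x̂, X̂₀) : x̂ ∈ X̂₀}`. -/
def P20 : Set (S.X 0 × Set (S.X 0)) := {q | q.1 ∈ S.X0 ∧ q.2 = S.X0}

/-- Open-loop triple trajectory `(x̂_t, P¹_t, P²_t)` generated by a sequence of
complete actions `θ`. -/
def ol3 (θ : ∀ s, S.Theta s) (x0 : S.X 0) (w : ∀ s, S.W s) :
    ∀ t : ℕ, S.X t × Set (S.X t) × Set (S.X t × Set (S.X t))
  | 0 => (x0, S.X0, S.P20)
  | t+1 =>
    let p := ol3 θ x0 w t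
    let u1 := (θ t).1 p.2.1 p.2.2
    let u2 := (θ t).2.1 p.2.2
    let u3 := (θ t).2.2
    (S.f t p.1 u1 u2 u3 (w t),
     S.ftil1 t p.2.1 (u1, u2, u3) (S.h1 t p.1 u1 u2 u3),
     S.ftil2 t p.2.2 (fun P => (θ t).1 P p.2.2) u2 u3 (S.h2 t p.1 u1 u2 u3))

/-- The realized `z³`-observation generated at time `t+1` along the open loop. -/
def obs3 (θ : ∀ s, S.Theta s) (x0 : S.X 0) (w : ∀ s, S.W s) (t : ℕ) : S.Z3 (t+1) :=
  let p := S.ol3 θ x0 w t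
  S.h3 t p.1 ((θ t).1 p.2.1 p.2.2) ((θ t).2.1 p.2.2) (θ t).2.2

/-- The subsystem-3 information state `P³_t(z³_{1:t}, θ_{0:t-1})`. -/
def P3 (t : ℕ) (z : ∀ ℓ : Fin t, S.Z3 (ℓ.1+1)) (θ : ∀ ℓ : Fin t, S.Theta ℓ.1) :
    Set (S.X t × Set (S.X t) × Set (S.X t × Set (S.X t))) :=
  {q | ∃ θf : ∀ s, S.Theta s, (∀ ℓ : Fin t, θf ℓ.1 = θ ℓ) ∧
    ∃ x0 ∈ S.X0, ∃ w : ∀ s, S.W s,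
      (∀ ℓ : Fin t, S.obs3 θf x0 w ℓ.1 = z ℓ) ∧ S.ol3 θf x0 w t = q}

end Pres3

namespace Pres3

variable (S : Pres3)

/-- A subsystem-3 strategy: it assigns to each history `(z³_{1:t}, θ_{0:t-1})`
a complete action `θ_t`. -/
def Sig3 := ∀ t : ℕ, (∀ ℓ : Fin t, S.Z3 (ℓ.1+1)) → (∀ ℓ : Fin t, S.Theta ℓ.1) →
    S.Theta t

/-- Closed-loop trajectory of the subsystem-3 prescription system under a
strategy `σ`: it carries `(x̂_t, P¹_t, P²_t)` and the histories of `z³`, `θ`. -/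
def cl3 (σ : S.Sig3) (x0 : S.X 0) (w : ∀ s, S.W s) :
    ∀ t : ℕ, (S.X t × Set (S.X t) × Set (S.X t × Set (S.X t))) ×
      (∀ ℓ : Fin t, S.Z3 (ℓ.1+1)) × (∀ ℓ : Fin t, S.Theta ℓ.1)
  | 0 => ((x0, S.X0, S.P20), fun i => i.elim0, fun i => i.elim0)
  | t+1 =>
    let p := cl3 σ x0 w t
    let θt := σ t p.2.1 p.2.2
    let u1 := θt.1 p.1.2.1 p.1.2.2
    let u2 := θt.2.1 p.1.2.2
    let u3 := θt.2.2
    ((S.f t p.1.1 u1 u2 u3 (w t),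
      S.ftil1 t p.1.2.1 (u1, u2, u3) (S.h1 t p.1.1 u1 u2 u3),
      S.ftil2 t p.1.2.2 (fun P => θt.1 P p.1.2.2) u2 u3 (S.h2 t p.1.1 u1 u2 u3)),
     Fin.snoc (α := fun ℓ : Fin (t+1) => S.Z3 (ℓ.1+1)) p.2.1
       (S.h3 t p.1.1 u1 u2 u3),
     Fin.snoc (α := fun ℓ : Fin (t+1) => S.Theta ℓ.1) p.2.2 θt)

/-- Worst-case cost of a subsystem-3 strategy, for terminal cost `dT`. -/
noncomputable def J3 (dT : S.X S.T → ℝ) (σ : S.Sig3) : ℝ :=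
  sSup {r | ∃ x0 ∈ S.X0, ∃ w : ∀ s, S.W s, r = dT (S.cl3 σ x0 w S.T).1.1}

/-- A subsystem-3 strategy is structured if it depends on the history only
through the information state `P³_t`. -/
def Structured3 (σ : S.Sig3) : Prop :=
  ∃ φ : ∀ t, Set (S.X t × Set (S.X t) × Set (S.X t × Set (S.X t))) → S.Theta t,
    ∀ (t : ℕ) (z : ∀ ℓ : Fin t, S.Z3 (ℓ.1+1)) (θ : ∀ ℓ : Fin t, S.Theta ℓ.1),
      σ t z θ = φ t (S.P3 t z θ)

end Pres3

namespace Pres3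

lemma snoc_mk_lt {n : ℕ} {Zf : ℕ → Sort*} (p : ∀ i : Fin n, Zf i.1) (x : Zf n)
    (j : ℕ) (h : j < n) (h2 : j < n + 1) :
    (Fin.snoc (α := fun i : Fin (n+1) => Zf i.1) p x) ⟨j, h2⟩ = p ⟨j, h⟩ :=
  Fin.snoc_castSucc (α := fun i : Fin (n+1) => Zf i.1) (p := p) (x := x) (i := ⟨j, h⟩)

lemma snoc_mk_last {n : ℕ} {Zf : ℕ → Sort*} (p : ∀ i : Fin n, Zf i.1) (x : Zf n)
    (h2 : n < n + 1) :
    (Fin.snoc (α := fun i : Fin (n+1) => Zf i.1) p x) ⟨n, h2⟩ = x :=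
  Fin.snoc_last (α := fun i : Fin (n+1) => Zf i.1) (p := p) (x := x)

variable (S : Pres3)

instance instThetaFinite (t : ℕ) : Finite (S.Theta t) := by
  have := S.Xfin t; have := S.U1fin t; have := S.U2fin t; have := S.U3fin t
  unfold Theta; infer_instance

instance instThetaNonempty (t : ℕ) : Nonempty (S.Theta t) := by
  have := S.U1ne t; have := S.U2ne t; have := S.U3ne t
  unfold Theta; infer_instance

instance instWNonempty : Nonempty (∀ s, S.W s) := ⟨fun s => (S.Wne s).some⟩

/-- The triple type at time `t`. -/
abbrev Tri (t : ℕ) := S.X t × Set (S.X t) × Set (S.X t × Set (S.X t))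

/-- One step of the triple dynamics. -/
def stepq (t : ℕ) (q : S.Tri t) (θt : S.Theta t) (wt : S.W t) : S.Tri (t+1) :=
  let u1 := θt.1 q.2.1 q.2.2
  let u2 := θt.2.1 q.2.2
  let u3 := θt.2.2
  (S.f t q.1 u1 u2 u3 wt,
   S.ftil1 t q.2.1 (u1, u2, u3) (S.h1 t q.1 u1 u2 u3),
   S.ftil2 t q.2.2 (fun P => θt.1 P q.2.2) u2 u3 (S.h2 t q.1 u1 u2 u3))

/-- The `z³`-observation emitted from triple `q` under complete action `θt`. -/
def obsq (t : ℕ) (q : S.Tri t) (θt : S.Theta t) : S.Z3 (t+1) :=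
  S.h3 t q.1 (θt.1 q.2.1 q.2.2) (θt.2.1 q.2.2) θt.2.2

lemma ol3_succ (θ : ∀ s, S.Theta s) (x0 : S.X 0) (w : ∀ s, S.W s) (t : ℕ) :
    S.ol3 θ x0 w (t+1) = S.stepq t (S.ol3 θ x0 w t) (θ t) (w t) := rfl

lemma obs3_eq (θ : ∀ s, S.Theta s) (x0 : S.X 0) (w : ∀ s, S.W s) (t : ℕ) :
    S.obs3 θ x0 w t = S.obsq t (S.ol3 θ x0 w t) (θ t) := rfl

lemma cl3_succ (σ : S.Sig3) (x0 : S.X 0) (w : ∀ s, S.W s) (t : ℕ) :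
    S.cl3 σ x0 w (t+1) =
      (S.stepq t (S.cl3 σ x0 w t).1
          (σ t (S.cl3 σ x0 w t).2.1 (S.cl3 σ x0 w t).2.2) (w t),
       Fin.snoc (α := fun ℓ : Fin (t+1) => S.Z3 (ℓ.1+1)) (S.cl3 σ x0 w t).2.1
         (S.obsq t (S.cl3 σ x0 w t).1 (σ t (S.cl3 σ x0 w t).2.1 (S.cl3 σ x0 w t).2.2)),
       Fin.snoc (α := fun ℓ : Fin (t+1) => S.Theta ℓ.1) (S.cl3 σ x0 w t).2.2
         (σ t (S.cl3 σ x0 w t).2.1 (S.cl3 σ x0 w t).2.2)) := rfl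

/-- The actions taken along the closed loop, as a full action sequence. -/
def thf (σ : S.Sig3) (x0 : S.X 0) (w : ∀ s, S.W s) : ∀ s, S.Theta s :=
  fun s => σ s (S.cl3 σ x0 w s).2.1 (S.cl3 σ x0 w s).2.2

lemma clA (σ : S.Sig3) (x0 : S.X 0) (w : ∀ s, S.W s) : ∀ t,
    S.cl3 σ x0 w t =
      (S.ol3 (S.thf σ x0 w) x0 w t,
       fun ℓ : Fin t => S.obs3 (S.thf σ x0 w) x0 w ℓ.1,
       fun ℓ : Fin t => S.thf σ x0 w ℓ.1) := by
  intro t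
  induction t with
  | zero =>
    refine congrArg (Prod.mk _) ?_
    refine congrArg₂ Prod.mk ?_ ?_ <;> exact funext fun i => i.elim0
  | succ t ih =>
    rw [cl3_succ]
    have hact : σ t (S.cl3 σ x0 w t).2.1 (S.cl3 σ x0 w t).2.2 = S.thf σ x0 w t := rfl
    rw [hact, ih]
    refine congrArg₂ Prod.mk rfl (congrArg₂ Prod.mk ?_ ?_)
    · funext ℓ
      obtain ⟨l, hl⟩ := ℓ
      rcases Nat.lt_or_ge l t with h | h
      · rw [snoc_mk_lt (Zf := fun i => S.Z3 (i+1)) _ _ l h hl]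
      · have hlt : l = t := by omega
        subst hlt
        rw [snoc_mk_last (Zf := fun i => S.Z3 (i+1)) _ _ hl]
        rfl
    · funext ℓ
      obtain ⟨l, hl⟩ := ℓ
      rcases Nat.lt_or_ge l t with h | h
      · rw [snoc_mk_lt (Zf := fun i => S.Theta i) _ _ l h hl]
      · have hlt : l = t := by omega
        subst hlt
        rw [snoc_mk_last (Zf := fun i => S.Theta i) _ _ hl]

lemma realized_mem (σ : S.Sig3) (x0 : S.X 0) (hx0 : x0 ∈ S.X0) (w : ∀ s, S.W s) (t : ℕ) :
    (S.cl3 σ x0 w t).1 ∈ S.P3 t (S.cl3 σ x0 w t).2.1 (S.cl3 σ x0 w t).2.2 := by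
  rw [clA]
  exact ⟨S.thf σ x0 w, fun ℓ => rfl, x0, hx0, w, fun ℓ => rfl, rfl⟩

/-- `σ`-consistency of a history. -/
def Consistent (σ : S.Sig3) (t : ℕ) (z : ∀ ℓ : Fin t, S.Z3 (ℓ.1+1))
    (θ : ∀ ℓ : Fin t, S.Theta ℓ.1) : Prop :=
  ∀ ℓ : Fin t, θ ℓ = σ ℓ.1 (fun j : Fin ℓ.1 => z ⟨j.1, Nat.lt_trans j.2 ℓ.2⟩)
    (fun j : Fin ℓ.1 => θ ⟨j.1, Nat.lt_trans j.2 ℓ.2⟩)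

lemma realized_consistent (σ : S.Sig3) (x0 : S.X 0) (w : ∀ s, S.W s) (t : ℕ) :
    S.Consistent σ t (S.cl3 σ x0 w t).2.1 (S.cl3 σ x0 w t).2.2 := by
  rw [clA]
  intro ℓ
  show S.thf σ x0 w ℓ.1 = _
  unfold thf
  rw [clA]
  rfl

lemma P3_zero (z : ∀ ℓ : Fin 0, S.Z3 (ℓ.1+1)) (θ : ∀ ℓ : Fin 0, S.Theta ℓ.1) :
    S.P3 0 z θ = {q | ∃ x0 ∈ S.X0, q = (x0, S.X0, S.P20)} := by
  ext q
  constructor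
  · rintro ⟨θf, hθf, x0, hx0, w, hobs, hol⟩
    exact ⟨x0, hx0, hol.symm⟩
  · rintro ⟨x0, hx0, rfl⟩
    exact ⟨Classical.arbitrary _, fun ℓ => ℓ.elim0, x0, hx0,
      Classical.arbitrary _, fun ℓ => ℓ.elim0, rfl⟩

lemma P3_zero_nonempty (z : ∀ ℓ : Fin 0, S.Z3 (ℓ.1+1)) (θ : ∀ ℓ : Fin 0, S.Theta ℓ.1) :
    (S.P3 0 z θ).Nonempty := by
  rw [P3_zero]
  obtain ⟨x0, hx0⟩ := S.X0ne
  exact ⟨(x0, S.X0, S.P20), x0, hx0, rfl⟩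

lemma ol3_congr (θ1 θ2 : ∀ s, S.Theta s) (x0 : S.X 0) (w1 w2 : ∀ s, S.W s) (t : ℕ)
    (hθ : ∀ s < t, θ1 s = θ2 s) (hw : ∀ s < t, w1 s = w2 s) :
    S.ol3 θ1 x0 w1 t = S.ol3 θ2 x0 w2 t := by
  induction t with
  | zero => rfl
  | succ t ih =>
    rw [ol3_succ, ol3_succ,
      ih (fun s hs => hθ s (Nat.lt_succ_of_lt hs)) (fun s hs => hw s (Nat.lt_succ_of_lt hs)),
      hθ t (Nat.lt_succ_self t), hw t (Nat.lt_succ_self t)]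

/-- The strategy-independent update of the subsystem-3 information state. -/
def Fset (t : ℕ) (P : Set (S.Tri t)) (θt : S.Theta t) (z' : S.Z3 (t+1)) :
    Set (S.Tri (t+1)) :=
  {q' | ∃ q ∈ P, S.obsq t q θt = z' ∧ ∃ wt, S.stepq t q θt wt = q'}

lemma P3_succ (t : ℕ) (z : ∀ ℓ : Fin t, S.Z3 (ℓ.1+1)) (θ : ∀ ℓ : Fin t, S.Theta ℓ.1)
    (θt : S.Theta t) (z' : S.Z3 (t+1)) :
    S.P3 (t+1) (Fin.snoc (α := fun ℓ : Fin (t+1) => S.Z3 (ℓ.1+1)) z z')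
      (Fin.snoc (α := fun ℓ : Fin (t+1) => S.Theta ℓ.1) θ θt) =
    S.Fset t (S.P3 t z θ) θt z' := by
  ext q'
  constructor
  · rintro ⟨θf, hθf, x0, hx0, w, hobs, hol⟩
    have hθt : θf t = θt := by
      have := hθf ⟨t, Nat.lt_succ_self t⟩
      rwa [snoc_mk_last (Zf := fun i => S.Theta i) _ _ (Nat.lt_succ_self t)] at this
    refine ⟨S.ol3 θf x0 w t, ⟨θf, ?_, x0, hx0, w, ?_, rfl⟩, ?_, w t, ?_⟩
    · intro ℓ
      have := hθf ⟨ℓ.1, Nat.lt_succ_of_lt ℓ.2⟩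
      rwa [snoc_mk_lt (Zf := fun i => S.Theta i) _ _ ℓ.1 ℓ.2 (Nat.lt_succ_of_lt ℓ.2)] at this
    · intro ℓ
      have := hobs ⟨ℓ.1, Nat.lt_succ_of_lt ℓ.2⟩
      rwa [snoc_mk_lt (Zf := fun i => S.Z3 (i+1)) _ _ ℓ.1 ℓ.2 (Nat.lt_succ_of_lt ℓ.2)] at this
    · have := hobs ⟨t, Nat.lt_succ_self t⟩
      rw [snoc_mk_last (Zf := fun i => S.Z3 (i+1)) _ _ (Nat.lt_succ_self t)] at this
      rw [← hθt]
      exact this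
    · rw [← hθt]
      exact hol
  · rintro ⟨q, ⟨θf, hθf, x0, hx0, w, hobs, hol⟩, hobs', wt, hstep⟩
    classical
    refine ⟨Function.update θf t θt, ?_, x0, hx0, Function.update w t wt, ?_, ?_⟩
    · intro ℓ
      obtain ⟨l, hl⟩ := ℓ
      rcases Nat.lt_or_ge l t with h | h
      · rw [snoc_mk_lt (Zf := fun i => S.Theta i) _ _ l h hl,
          Function.update_of_ne (by omega : l ≠ t)]
        exact hθf ⟨l, h⟩
      · have : l = t := by omega
        subst this
        rw [snoc_mk_last (Zf := fun i => S.Theta i) _ _ hl, Function.update_self]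
    · have holeq : ∀ s ≤ t, S.ol3 (Function.update θf t θt) x0 (Function.update w t wt) s
          = S.ol3 θf x0 w s := by
        intro s hs
        refine ol3_congr S _ _ _ _ _ s (fun j hj => ?_) (fun j hj => ?_) <;>
          exact Function.update_of_ne (by omega) _ _
      intro ℓ
      obtain ⟨l, hl⟩ := ℓ
      rcases Nat.lt_or_ge l t with h | h
      · rw [snoc_mk_lt (Zf := fun i => S.Z3 (i+1)) _ _ l h hl]
        show S.obsq l _ _ = z ⟨l, h⟩
        rw [holeq l (le_of_lt h), Function.update_of_ne (by omega : l ≠ t)]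
        exact hobs ⟨l, h⟩
      · have : l = t := by omega
        subst this
        rw [snoc_mk_last (Zf := fun i => S.Z3 (i+1)) _ _ hl]
        show S.obsq l _ _ = z'
        rw [holeq l le_rfl, Function.update_self, hol]
        exact hobs'
    · show S.stepq t _ _ _ = q'
      have holeq : S.ol3 (Function.update θf t θt) x0 (Function.update w t wt) t
          = S.ol3 θf x0 w t := by
        refine ol3_congr S _ _ _ _ _ t (fun j hj => ?_) (fun j hj => ?_) <;>
          exact Function.update_of_ne (by omega) _ _
      rw [holeq, Function.update_self, Function.update_self, hol]
      exact hstep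

lemma mem_P3_realizable (σ : S.Sig3) (t : ℕ) (z : ∀ ℓ : Fin t, S.Z3 (ℓ.1+1))
    (θ : ∀ ℓ : Fin t, S.Theta ℓ.1) (hcons : S.Consistent σ t z θ)
    (q : S.Tri t) (hq : q ∈ S.P3 t z θ) :
    ∃ x0 ∈ S.X0, ∃ w, S.cl3 σ x0 w t = (q, z, θ) := by
  obtain ⟨θf, hθf, x0, hx0, w, hobs, hol⟩ := hq
  suffices h : ∀ s (hs : s ≤ t), S.cl3 σ x0 w s =
      (S.ol3 θf x0 w s,
       fun j : Fin s => z ⟨j.1, Nat.lt_of_lt_of_le j.2 hs⟩,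
       fun j : Fin s => θ ⟨j.1, Nat.lt_of_lt_of_le j.2 hs⟩) by
    refine ⟨x0, hx0, w, ?_⟩
    rw [h t le_rfl, hol]
  intro s
  induction s with
  | zero =>
    intro _
    refine congrArg (Prod.mk _) ?_
    refine congrArg₂ Prod.mk ?_ ?_ <;> exact funext fun i => i.elim0
  | succ s ih =>
    intro hs
    have hst : s < t := hs
    rw [cl3_succ, ih (le_of_lt hst)]
    have hact : σ s (fun j : Fin s => z ⟨j.1, Nat.lt_of_lt_of_le j.2 (le_of_lt hst)⟩)
        (fun j : Fin s => θ ⟨j.1, Nat.lt_of_lt_of_le j.2 (le_of_lt hst)⟩) = θf s := by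
      rw [hθf ⟨s, hst⟩]
      exact (hcons ⟨s, hst⟩).symm
    rw [hact]
    refine congrArg₂ Prod.mk rfl (congrArg₂ Prod.mk ?_ ?_)
    · funext ℓ
      obtain ⟨l, hl⟩ := ℓ
      rcases Nat.lt_or_ge l s with h | h
      · rw [snoc_mk_lt (Zf := fun i => S.Z3 (i+1)) _ _ l h hl]
      · have : l = s := by omega
        subst this
        rw [snoc_mk_last (Zf := fun i => S.Z3 (i+1)) _ _ hl]
        exact hobs ⟨l, hst⟩
    · funext ℓ
      obtain ⟨l, hl⟩ := ℓ
      rcases Nat.lt_or_ge l s with h | h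
      · rw [snoc_mk_lt (Zf := fun i => S.Theta i) _ _ l h hl]
      · have : l = s := by omega
        subst this
        rw [snoc_mk_last (Zf := fun i => S.Theta i) _ _ hl]
        exact hθf ⟨l, hst⟩

lemma consistent_snoc (σ : S.Sig3) (t : ℕ) (z : ∀ ℓ : Fin t, S.Z3 (ℓ.1+1))
    (θ : ∀ ℓ : Fin t, S.Theta ℓ.1) (hcons : S.Consistent σ t z θ)
    (θt : S.Theta t) (hθt : θt = σ t z θ) (z' : S.Z3 (t+1)) :
    S.Consistent σ (t+1) (Fin.snoc (α := fun ℓ : Fin (t+1) => S.Z3 (ℓ.1+1)) z z')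
      (Fin.snoc (α := fun ℓ : Fin (t+1) => S.Theta ℓ.1) θ θt) := by
  intro ℓ
  obtain ⟨l, hl⟩ := ℓ
  rcases Nat.lt_or_ge l t with h | h
  · rw [snoc_mk_lt (Zf := fun i => S.Theta i) _ _ l h hl]
    have e1 : (fun j : Fin l => (Fin.snoc (α := fun ℓ : Fin (t+1) => S.Z3 (ℓ.1+1)) z z')
        ⟨j.1, Nat.lt_trans j.2 hl⟩) = (fun j : Fin l => z ⟨j.1, Nat.lt_trans j.2 h⟩) := by
      funext j
      exact snoc_mk_lt (Zf := fun i => S.Z3 (i+1)) z z' j.1 (Nat.lt_trans j.2 h) _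
    have e2 : (fun j : Fin l => (Fin.snoc (α := fun ℓ : Fin (t+1) => S.Theta ℓ.1) θ θt)
        ⟨j.1, Nat.lt_trans j.2 hl⟩) = (fun j : Fin l => θ ⟨j.1, Nat.lt_trans j.2 h⟩) := by
      funext j
      exact snoc_mk_lt (Zf := fun i => S.Theta i) θ θt j.1 (Nat.lt_trans j.2 h) _
    rw [e1, e2]
    exact hcons ⟨l, h⟩
  · have : l = t := by omega
    subst this
    rw [snoc_mk_last (Zf := fun i => S.Theta i) _ _ hl]
    have e1 : (fun j : Fin l => (Fin.snoc (α := fun ℓ : Fin (l+1) => S.Z3 (ℓ.1+1)) z z')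
        ⟨j.1, Nat.lt_trans j.2 hl⟩) = z := by
      funext j
      exact snoc_mk_lt (Zf := fun i => S.Z3 (i+1)) z z' j.1 j.2 _
    have e2 : (fun j : Fin l => (Fin.snoc (α := fun ℓ : Fin (l+1) => S.Theta ℓ.1) θ θt)
        ⟨j.1, Nat.lt_trans j.2 hl⟩) = θ := by
      funext j
      exact snoc_mk_lt (Zf := fun i => S.Theta i) θ θt j.1 j.2 _
    rw [e1, e2]
    exact hθt

lemma subset_range_bdd {α : Type*} [Finite α] (f : α → ℝ) {s : Set ℝ}
    (h : s ⊆ Set.range f) : BddAbove s ∧ BddBelow s :=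
  ⟨((Set.finite_range f).subset h).bddAbove, ((Set.finite_range f).subset h).bddBelow⟩

/-- The worst-case value function on information states. -/
noncomputable def V (dT : S.X S.T → ℝ) : ∀ t, Set (S.Tri t) → ℝ := fun t P =>
  if ht : t = S.T then sSup {r | ∃ q ∈ P, r = dT (ht ▸ q.1)}
  else if h : t < S.T then
    sInf (Set.range fun θt : S.Theta t =>
      sSup {r | ∃ z' : S.Z3 (t+1), (S.Fset t P θt z').Nonempty ∧
        r = V dT (t+1) (S.Fset t P θt z')})
  else 0
termination_by t => S.T - t
decreasing_by omega

/-- one-step lookahead value -/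
noncomputable def Hf (dT : S.X S.T → ℝ) (t : ℕ) (P : Set (S.Tri t)) (θt : S.Theta t) : ℝ :=
  sSup {r | ∃ z' : S.Z3 (t+1), (S.Fset t P θt z').Nonempty ∧
    r = S.V dT (t+1) (S.Fset t P θt z')}

lemma V_spec_T (dT : S.X S.T → ℝ) (P : Set (S.Tri S.T)) :
    S.V dT S.T P = sSup {r | ∃ q ∈ P, r = dT q.1} := by
  rw [V, dif_pos rfl]

lemma V_spec_lt (dT : S.X S.T → ℝ) {t : ℕ} (ht : t < S.T) (P : Set (S.Tri t)) :
    S.V dT t P = sInf (Set.range (S.Hf dT t P)) := by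
  rw [V, dif_neg (by omega), dif_pos ht]
  rfl

lemma exists_argmin (dT : S.X S.T → ℝ) {t : ℕ} (ht : t < S.T) (P : Set (S.Tri t)) :
    ∃ θt, S.Hf dT t P θt = S.V dT t P := by
  have hfin : (Set.range (S.Hf dT t P)).Finite := Set.finite_range _
  have hne : (Set.range (S.Hf dT t P)).Nonempty := Set.range_nonempty _
  obtain ⟨θt, hθt⟩ := hne.csInf_mem hfin
  exact ⟨θt, by rw [V_spec_lt S dT ht, hθt]⟩

/-- optimal structured selection -/
noncomputable def phiOpt (dT : S.X S.T → ℝ) (t : ℕ) (P : Set (S.Tri t)) : S.Theta t :=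
  if ht : t < S.T then Classical.choose (S.exists_argmin dT ht P)
  else Classical.arbitrary _

lemma phiOpt_spec (dT : S.X S.T → ℝ) {t : ℕ} (ht : t < S.T) (P : Set (S.Tri t)) :
    S.Hf dT t P (S.phiOpt dT t P) = S.V dT t P := by
  rw [phiOpt, dif_pos ht]
  exact Classical.choose_spec (S.exists_argmin dT ht P)

lemma forward (dT : S.X S.T → ℝ) (σ' : S.Sig3)
    (hσ' : ∀ t z θ, σ' t z θ = S.phiOpt dT t (S.P3 t z θ))
    (x0 : S.X 0) (hx0 : x0 ∈ S.X0) (w : ∀ s, S.W s) :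
    ∀ t, t ≤ S.T →
      S.V dT t (S.P3 t (S.cl3 σ' x0 w t).2.1 (S.cl3 σ' x0 w t).2.2) ≤
      S.V dT 0 (S.P3 0 (fun i => i.elim0) (fun i => i.elim0)) := by
  intro t
  induction t with
  | zero => intro _; exact le_rfl
  | succ t ih =>
    intro ht1
    have htT : t < S.T := ht1
    have hrw : S.cl3 σ' x0 w (t+1) =
        (S.stepq t (S.cl3 σ' x0 w t).1
            (σ' t (S.cl3 σ' x0 w t).2.1 (S.cl3 σ' x0 w t).2.2) (w t),
         Fin.snoc (α := fun ℓ : Fin (t+1) => S.Z3 (ℓ.1+1)) (S.cl3 σ' x0 w t).2.1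
           (S.obsq t (S.cl3 σ' x0 w t).1
             (σ' t (S.cl3 σ' x0 w t).2.1 (S.cl3 σ' x0 w t).2.2)),
         Fin.snoc (α := fun ℓ : Fin (t+1) => S.Theta ℓ.1) (S.cl3 σ' x0 w t).2.2
           (σ' t (S.cl3 σ' x0 w t).2.1 (S.cl3 σ' x0 w t).2.2)) := cl3_succ S σ' x0 w t
    rw [hrw]
    set Z := (S.cl3 σ' x0 w t).2.1 with hZ
    set Θ := (S.cl3 σ' x0 w t).2.2 with hΘ
    set P := S.P3 t Z Θ with hP
    set θt := σ' t Z Θ with hθt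
    set z'r := S.obsq t (S.cl3 σ' x0 w t).1 θt with hz'r
    rw [P3_succ]
    have hmem : (S.cl3 σ' x0 w t).1 ∈ P := S.realized_mem σ' x0 hx0 w t
    have hne' : (S.Fset t P θt z'r).Nonempty :=
      ⟨S.stepq t (S.cl3 σ' x0 w t).1 θt (w t), (S.cl3 σ' x0 w t).1, hmem, rfl, w t, rfl⟩
    have h1 : S.V dT (t+1) (S.Fset t P θt z'r) ≤ S.Hf dT t P θt := by
      have := S.Z3fin (t+1)
      refine le_csSup ?_ ⟨z'r, hne', rfl⟩
      exact (subset_range_bdd (fun z' : S.Z3 (t+1) => S.V dT (t+1) (S.Fset t P θt z'))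
        (by rintro r ⟨z', _, rfl⟩; exact ⟨z', rfl⟩)).1
    have h2 : S.Hf dT t P θt = S.V dT t P := by
      rw [hθt, hσ' t Z Θ, ← hP]
      exact S.phiOpt_spec dT htT P
    exact (h1.trans_eq h2).trans (ih (le_of_lt htT))

lemma J3_bddAbove (dT : S.X S.T → ℝ) (σ : S.Sig3) :
    BddAbove {r | ∃ x0 ∈ S.X0, ∃ w : ∀ s, S.W s, r = dT (S.cl3 σ x0 w S.T).1.1} := by
  have := S.Xfin S.T
  exact (subset_range_bdd dT (by rintro r ⟨x0, _, w, rfl⟩; exact ⟨_, rfl⟩)).1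

lemma J3_set_nonempty (dT : S.X S.T → ℝ) (σ : S.Sig3) :
    {r | ∃ x0 ∈ S.X0, ∃ w : ∀ s, S.W s, r = dT (S.cl3 σ x0 w S.T).1.1}.Nonempty := by
  obtain ⟨x0, hx0⟩ := S.X0ne
  exact ⟨_, x0, hx0, Classical.arbitrary _, rfl⟩

lemma backward (dT : S.X S.T → ℝ) (σ : S.Sig3) :
    ∀ k t, t + k = S.T → ∀ z θ, S.Consistent σ t z θ → (S.P3 t z θ).Nonempty →
      S.V dT t (S.P3 t z θ) ≤ S.J3 dT σ := by
  intro k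
  induction k with
  | zero =>
    intro t ht z θ hcons hne
    have : t = S.T := by omega
    subst this
    rw [V_spec_T]
    refine csSup_le ?_ ?_
    · obtain ⟨q, hq⟩ := hne
      exact ⟨dT q.1, q, hq, rfl⟩
    · rintro r ⟨q, hq, rfl⟩
      obtain ⟨x0, hx0, w, hcl⟩ := S.mem_P3_realizable σ _ z θ hcons q hq
      refine le_csSup (S.J3_bddAbove dT σ) ⟨x0, hx0, w, ?_⟩
      rw [hcl]
  | succ k ih =>
    intro t ht z θ hcons hne
    have htT : t < S.T := by omega
    rw [V_spec_lt S dT htT]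
    set θt := σ t z θ with hθt
    have hbddB : BddBelow (Set.range (S.Hf dT t (S.P3 t z θ))) :=
      (Set.finite_range _).bddBelow
    refine le_trans (csInf_le hbddB ⟨θt, rfl⟩) ?_
    refine csSup_le ?_ ?_
    · obtain ⟨q, hq⟩ := hne
      obtain ⟨wt⟩ := S.Wne t
      exact ⟨_, S.obsq t q θt, ⟨S.stepq t q θt wt, q, hq, rfl, wt, rfl⟩, rfl⟩
    · rintro r ⟨z', hne', rfl⟩
      rw [← P3_succ]
      exact ih (t+1) (by omega) _ _
        (S.consistent_snoc σ t z θ hcons θt rfl z')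
        (by rw [P3_succ]; exact hne')

lemma Ja (dT : S.X S.T → ℝ) (σ' : S.Sig3)
    (hσ' : ∀ t z θ, σ' t z θ = S.phiOpt dT t (S.P3 t z θ)) :
    S.J3 dT σ' ≤ S.V dT 0 (S.P3 0 (fun i => i.elim0) (fun i => i.elim0)) := by
  refine csSup_le (S.J3_set_nonempty dT σ') ?_
  rintro r ⟨x0, hx0, w, rfl⟩
  have hfinT : Finite (S.Tri S.T) := by
    have := S.Xfin S.T
    infer_instance
  have h1 : dT (S.cl3 σ' x0 w S.T).1.1 ≤
      S.V dT S.T (S.P3 S.T (S.cl3 σ' x0 w S.T).2.1 (S.cl3 σ' x0 w S.T).2.2) := by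
    rw [V_spec_T]
    refine le_csSup ?_ ⟨(S.cl3 σ' x0 w S.T).1, S.realized_mem σ' x0 hx0 w S.T, rfl⟩
    exact (subset_range_bdd (fun q : S.Tri S.T => dT q.1)
      (by rintro r ⟨q, _, rfl⟩; exact ⟨q, rfl⟩)).1
  exact h1.trans (S.forward dT σ' hσ' x0 hx0 w S.T le_rfl)

lemma Jb (dT : S.X S.T → ℝ) (σ : S.Sig3) :
    S.V dT 0 (S.P3 0 (fun i => i.elim0) (fun i => i.elim0)) ≤ S.J3 dT σ :=
  S.backward dT σ S.T 0 (Nat.zero_add _) _ _ (fun ℓ => ℓ.elim0)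
    (S.P3_zero_nonempty _ _)

lemma main2 (dT : S.X S.T → ℝ) :
    ∃ σ' : S.Sig3, S.Structured3 σ' ∧ ∀ σ : S.Sig3, S.J3 dT σ' ≤ S.J3 dT σ := by
  refine ⟨fun t z θ => S.phiOpt dT t (S.P3 t z θ),
    ⟨fun t P => S.phiOpt dT t P, fun t z θ => rfl⟩, fun σ => ?_⟩
  exact (S.Ja dT _ (fun t z θ => rfl)).trans (S.Jb dT σ)

end Pres3

/-- in the subsystem-3 prescription system it is without loss of
optimality to restrict to strategies of the form `θ_t = φ_t(P³_t)`. -/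
theorem stmt10 (S : Pres3) (dT : S.X S.T → ℝ) :
    (sInf {r | ∃ σ : S.Sig3, r = S.J3 dT σ} =
      sInf {r | ∃ σ : S.Sig3, S.Structured3 σ ∧ r = S.J3 dT σ}) ∧
    ∀ σ : S.Sig3, ∃ σ' : S.Sig3, S.Structured3 σ' ∧ S.J3 dT σ' ≤ S.J3 dT σ := by
  obtain ⟨σ', hstruct, hopt⟩ := S.main2 dT
  have hBA : {r | ∃ σ : S.Sig3, S.Structured3 σ ∧ r = S.J3 dT σ} ⊆
      {r | ∃ σ : S.Sig3, r = S.J3 dT σ} := by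
    rintro r ⟨σ, _, rfl⟩; exact ⟨σ, rfl⟩
  have hAbdd : BddBelow {r | ∃ σ : S.Sig3, r = S.J3 dT σ} := by
    have := S.Xfin S.T
    refine ⟨sInf (Set.range dT), ?_⟩
    rintro r ⟨σ, rfl⟩
    obtain ⟨r0, hr0⟩ := S.J3_set_nonempty dT σ
    have h1 : sInf (Set.range dT) ≤ r0 := by
      obtain ⟨x0, hx0, w, rfl⟩ := hr0
      exact csInf_le (Set.finite_range dT).bddBelow ⟨_, rfl⟩
    exact h1.trans (le_csSup (S.J3_bddAbove dT σ) hr0)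
  have hBne : {r | ∃ σ : S.Sig3, S.Structured3 σ ∧ r = S.J3 dT σ}.Nonempty :=
    ⟨_, σ', hstruct, rfl⟩
  constructor
  · refine le_antisymm (csInf_le_csInf hAbdd hBne hBA) ?_
    refine le_csInf ⟨_, σ', rfl⟩ ?_
    rintro r ⟨σ, rfl⟩
    exact (csInf_le (hAbdd.mono hBA) ⟨σ', hstruct, rfl⟩).trans (hopt σ)
  · exact fun σ => ⟨σ', hstruct, hopt σ⟩
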